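/- Let X, Y be real Banach spaces and N an absolute normalized norm on ℝ². If a, b ≥ 0 with N(a,b) = 1, x is a Δ-point of X and y is a Δ-point of Y, then (a·x, b·y) is a Δ-point of Z = X ⊕_N Y. Consequently, if X and Y both satisfy B_X = cl conv Δ_X and B_Y = cl conv Δ_Y, then B_Z = cl conv Δ_Z. -/

import Mathlib

/-!
Fix `a, b ≥ 0` with `N (a, b) = 1`. The map `(u, v) ↦ (a • u, b • v)` into `X ⊕_N Y` is continuous
and linear, so it maps closed convex hulls into closed convex hulls; and since `N` is monotone in
the absolute values of its arguments, it sends pairs of unit-ball points that are `(2 - ε)`-far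
from `x` and from `y` to unit-ball points that are `(2 - ε)`-far from `(a • x, b • y)`. This
transfers the Δ-point condition. A point `z = (p, q)` of the unit ball of `Z` equals
`(a • x', b • y')` with `‖x'‖, ‖y'‖ ≤ 1` once `(a, b) ≥ (‖p‖, ‖q‖)` is chosen on the unit sphere
of `N`, which the intermediate value theorem provides along `(‖p‖ + r, ‖q‖ + r)`; the first part,
applied to the Δ-points whose convex combinations approximate `x'` and `y'`, finishes.
-/

/-- The set of Δ-points of a real normed space. -/
def deltaPoints (X : Type*) [NormedAddCommGroup X] [NormedSpace ℝ X] : Set X :=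
  {x : X | ‖x‖ = 1 ∧ ∀ ε > (0 : ℝ),
    x ∈ closure (convexHull ℝ {y : X | ‖y‖ ≤ 1 ∧ 2 - ε ≤ ‖x - y‖})}

open Set Metric Convex

structure IsAbsoluteSeminorm (N : ℝ × ℝ → ℝ) : Prop where
  add_le : ∀ u v, N (u + v) ≤ N u + N v
  smul : ∀ (t : ℝ) u, N (t • u) = |t| * N u
  abs_eq : ∀ s t : ℝ, N (s, t) = N (|s|, |t|)

namespace IsAbsoluteSeminorm

variable {N : ℝ × ℝ → ℝ} (hN : IsAbsoluteSeminorm N)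
include hN

lemma convexOn : ConvexOn ℝ univ N :=
  ⟨convex_univ, fun u _ v _ a b ha hb _ => by
    simpa [hN.smul, abs_of_nonneg ha, abs_of_nonneg hb] using hN.add_le (a • u) (b • v)⟩

protected lemma continuous : Continuous N :=
  hN.convexOn.locallyLipschitz.continuous

lemma le_of_abs_le_left {s' s : ℝ} (t : ℝ) (h : |s'| ≤ |s|) : N (s', t) ≤ N (s, t) := by
  have hmem : (s', t) ∈ [(-|s|, t) -[ℝ] (|s|, t)] := by
    rw [← Prod.image_mk_segment_left, segment_eq_Icc (neg_le_self (abs_nonneg s))]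
    exact ⟨s', abs_le.mp h, rfl⟩
  calc N (s', t) ≤ max (N (-|s|, t)) (N (|s|, t)) :=
        hN.convexOn.le_on_segment trivial trivial hmem
    _ = N (s, t) := by rw [hN.abs_eq (-|s|) t, hN.abs_eq |s| t, hN.abs_eq s t]; simp

lemma le_of_abs_le_right (s : ℝ) {t' t : ℝ} (h : |t'| ≤ |t|) : N (s, t') ≤ N (s, t) := by
  have hmem : (s, t') ∈ [(s, -|t|) -[ℝ] (s, |t|)] := by
    rw [← Prod.image_mk_segment_right, segment_eq_Icc (neg_le_self (abs_nonneg t))]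
    exact ⟨t', abs_le.mp h, rfl⟩
  calc N (s, t') ≤ max (N (s, -|t|)) (N (s, |t|)) :=
        hN.convexOn.le_on_segment trivial trivial hmem
    _ = N (s, t) := by rw [hN.abs_eq s (-|t|), hN.abs_eq s |t|, hN.abs_eq s t]; simp

lemma mono {s' s t' t : ℝ} (hs : |s'| ≤ |s|) (ht : |t'| ≤ |t|) : N (s', t') ≤ N (s, t) :=
  (hN.le_of_abs_le_right s' ht).trans (hN.le_of_abs_le_left t hs)

lemma nonneg (u : ℝ × ℝ) : 0 ≤ N u := by
  have hzero : N 0 = 0 := by simpa using hN.smul 0 0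
  simpa [Prod.mk_zero_zero, hzero] using
    hN.mono (s' := 0) (t' := 0) (s := u.1) (t := u.2) (by simp) (by simp)

lemma apply_le (s t : ℝ) : N (s, t) ≤ |s| * N (1, 0) + |t| * N (0, 1) := by
  have hdecomp : ((s, t) : ℝ × ℝ) = s • (1, 0) + t • (0, 1) := by ext <;> simp
  rw [hdecomp, ← hN.smul, ← hN.smul]
  exact hN.add_le _ _

lemma apply_mul_le {c d : ℝ} (a b : ℝ) (hc : |c| ≤ 1) (hd : |d| ≤ 1) :
    N (a * c, b * d) ≤ N (a, b) :=
  hN.mono (by simpa [abs_mul] using mul_le_of_le_one_right (abs_nonneg a) hc)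
    (by simpa [abs_mul] using mul_le_of_le_one_right (abs_nonneg b) hd)

lemma mul_apply_le_apply_mul {r c d : ℝ} (a b : ℝ) (hr : 0 ≤ r) (hc : r ≤ |c|) (hd : r ≤ |d|) :
    r * N (a, b) ≤ N (a * c, b * d) := by
  have hscale := hN.smul r (a, b)
  rw [abs_of_nonneg hr, Prod.smul_mk, smul_eq_mul, smul_eq_mul] at hscale
  rw [← hscale]
  refine hN.mono ?_ ?_
  · rw [abs_mul, abs_mul, abs_of_nonneg hr, mul_comm]; gcongr
  · rw [abs_mul, abs_mul, abs_of_nonneg hr, mul_comm]; gcongr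

lemma exists_le_apply_eq_one (h₁ : N (1, 0) = 1) {s t : ℝ} (hs : 0 ≤ s) (ht : 0 ≤ t)
    (hst : N (s, t) ≤ 1) : ∃ a b, s ≤ a ∧ t ≤ b ∧ N (a, b) = 1 := by
  have hcont : ContinuousOn (fun r : ℝ => N (s + r, t + r)) (Icc 0 1) := by
    have := hN.continuous; fun_prop
  have hone : 1 ≤ N (s + 1, t + 1) :=
    h₁ ▸ hN.mono (by rw [abs_one, abs_of_nonneg (by positivity)]; linarith)
      (by rw [abs_zero]; positivity)
  obtain ⟨r, hr, hNr⟩ :=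
    intermediate_value_Icc zero_le_one hcont ⟨by simpa using hst, hone⟩
  exact ⟨s + r, t + r, by linarith [hr.1], by linarith [hr.1], hNr⟩

end IsAbsoluteSeminorm

lemma map_mem_closure_convexHull_prod {𝕜 E F G : Type*} [Field 𝕜] [LinearOrder 𝕜]
    [IsStrictOrderedRing 𝕜] [AddCommGroup E] [Module 𝕜 E] [TopologicalSpace E]
    [AddCommGroup F] [Module 𝕜 F] [TopologicalSpace F]
    [AddCommGroup G] [Module 𝕜 G] [TopologicalSpace G]
    (f : E × F →ₗ[𝕜] G) (hf : Continuous f) {S : Set E} {T : Set F} {U : Set G}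
    (hST : f '' (S ×ˢ T) ⊆ U) {x : E} {y : F}
    (hx : x ∈ closure (convexHull 𝕜 S)) (hy : y ∈ closure (convexHull 𝕜 T)) :
    f (x, y) ∈ closure (convexHull 𝕜 U) := by
  have hxy : (x, y) ∈ closure (convexHull 𝕜 (S ×ˢ T)) := by
    rw [convexHull_prod, closure_prod_eq]
    exact ⟨hx, hy⟩
  have himage := image_closure_subset_closure_image hf (mem_image_of_mem f hxy)
  rw [f.image_convexHull] at himage
  exact closure_mono (convexHull_mono hST) himage

lemma exists_smul_eq_of_norm_le {E : Type*} [NormedAddCommGroup E] [NormedSpace ℝ E]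
    {p : E} {a : ℝ} (h : ‖p‖ ≤ a) : ∃ x : E, ‖x‖ ≤ 1 ∧ a • x = p := by
  rcases (norm_nonneg p |>.trans h).eq_or_lt with rfl | ha
  · exact ⟨0, by simp, by simpa using (norm_le_zero_iff.mp h).symm⟩
  · refine ⟨a⁻¹ • p, ?_, smul_inv_smul₀ ha.ne' p⟩
    rw [norm_smul, Real.norm_of_nonneg (inv_nonneg.mpr ha.le), inv_mul_le_iff₀ ha, mul_one]
    exact h

lemma closure_convexHull_deltaPoints_subset (X : Type*) [NormedAddCommGroup X]
    [NormedSpace ℝ X] : closure (convexHull ℝ (deltaPoints X)) ⊆ closedBall 0 1 :=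
  closure_minimal
    (convexHull_min (fun _ hx => mem_closedBall_zero_iff.mpr hx.1.le) (convex_closedBall 0 1))
    isClosed_closedBall

section AbsoluteSum

variable {X Y Z : Type*} [NormedAddCommGroup X] [NormedSpace ℝ X] [NormedAddCommGroup Y]
  [NormedSpace ℝ Y] [NormedAddCommGroup Z] [NormedSpace ℝ Z] {N : ℝ × ℝ → ℝ}
  {e : Z ≃ₗ[ℝ] X × Y}

lemma norm_symm_smul (he : ∀ z : Z, ‖z‖ = N (‖(e z).1‖, ‖(e z).2‖)) {a b : ℝ} (ha : 0 ≤ a)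
    (hb : 0 ≤ b) (x : X) (y : Y) : ‖e.symm (a • x, b • y)‖ = N (a * ‖x‖, b * ‖y‖) := by
  rw [he, e.apply_symm_apply, norm_smul, norm_smul, Real.norm_of_nonneg ha,
    Real.norm_of_nonneg hb]

lemma continuous_symm (hN : IsAbsoluteSeminorm N)
    (he : ∀ z : Z, ‖z‖ = N (‖(e z).1‖, ‖(e z).2‖)) : Continuous e.symm := by
  refine AddMonoidHomClass.continuous_of_bound e.symm (N (1, 0) + N (0, 1)) fun p => ?_
  have hp := norm_symm_smul he zero_le_one zero_le_one p.1 p.2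
  simp only [one_smul, one_mul] at hp
  rw [hp]
  calc N (‖p.1‖, ‖p.2‖) ≤ |‖p.1‖| * N (1, 0) + |‖p.2‖| * N (0, 1) := hN.apply_le _ _
    _ ≤ ‖p‖ * N (1, 0) + ‖p‖ * N (0, 1) := by
        rw [abs_norm, abs_norm]
        gcongr
        exacts [hN.nonneg _, norm_fst_le p, hN.nonneg _, norm_snd_le p]
    _ = (N (1, 0) + N (0, 1)) * ‖p‖ := by ring

lemma symm_smul_mem_closure_convexHull (hN : IsAbsoluteSeminorm N)
    (he : ∀ z : Z, ‖z‖ = N (‖(e z).1‖, ‖(e z).2‖)) (a b : ℝ) {S : Set X} {T : Set Y}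
    {U : Set Z} (hST : ∀ u ∈ S, ∀ v ∈ T, e.symm (a • u, b • v) ∈ U) {x : X} {y : Y}
    (hx : x ∈ closure (convexHull ℝ S)) (hy : y ∈ closure (convexHull ℝ T)) :
    e.symm (a • x, b • y) ∈ closure (convexHull ℝ U) := by
  let f : X × Y →ₗ[ℝ] Z :=
    e.symm.toLinearMap ∘ₗ (a • LinearMap.id).prodMap (b • LinearMap.id)
  have hf : Continuous f := (continuous_symm hN he).comp
    (by fun_prop : Continuous fun p : X × Y => (a • p.1, b • p.2))
  refine map_mem_closure_convexHull_prod f hf ?_ hx hy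
  rintro _ ⟨⟨u, v⟩, ⟨hu, hv⟩, rfl⟩
  exact hST u hu v hv

lemma symm_smul_mem_deltaPoints (hN : IsAbsoluteSeminorm N)
    (he : ∀ z : Z, ‖z‖ = N (‖(e z).1‖, ‖(e z).2‖)) {a b : ℝ} (ha : 0 ≤ a) (hb : 0 ≤ b)
    (hab : N (a, b) = 1) {x : X} (hx : x ∈ deltaPoints X) {y : Y} (hy : y ∈ deltaPoints Y) :
    e.symm (a • x, b • y) ∈ deltaPoints Z := by
  refine ⟨by rw [norm_symm_smul he ha hb, hx.1, hy.1, mul_one, mul_one, hab], fun ε hε => ?_⟩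
  refine symm_smul_mem_closure_convexHull hN he a b ?_ (hx.2 ε hε) (hy.2 ε hε)
  rintro u ⟨hu, hxu⟩ v ⟨hv, hyv⟩
  refine ⟨?_, ?_⟩
  · rw [norm_symm_smul he ha hb, ← hab]
    exact hN.apply_mul_le a b (by rwa [abs_norm]) (by rwa [abs_norm])
  · rw [← map_sub, Prod.mk_sub_mk, ← smul_sub, ← smul_sub, norm_symm_smul he ha hb]
    rcases le_total (2 - ε) 0 with hneg | hpos
    · exact hneg.trans (hN.nonneg _)
    · simpa [hab] using
        hN.mul_apply_le_apply_mul a b hpos (by rwa [abs_norm]) (by rwa [abs_norm])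

lemma exists_eq_symm_smul (hN : IsAbsoluteSeminorm N) (h₁ : N (1, 0) = 1)
    (he : ∀ z : Z, ‖z‖ = N (‖(e z).1‖, ‖(e z).2‖)) {z : Z} (hz : ‖z‖ ≤ 1) :
    ∃ a b, 0 ≤ a ∧ 0 ≤ b ∧ N (a, b) = 1 ∧
      ∃ x : X, ‖x‖ ≤ 1 ∧ ∃ y : Y, ‖y‖ ≤ 1 ∧ z = e.symm (a • x, b • y) := by
  rw [he] at hz
  obtain ⟨a, b, hpa, hqb, hab⟩ :=
    hN.exists_le_apply_eq_one h₁ (norm_nonneg _) (norm_nonneg _) hz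
  obtain ⟨x, hx, hxp⟩ := exists_smul_eq_of_norm_le hpa
  obtain ⟨y, hy, hyq⟩ := exists_smul_eq_of_norm_le hqb
  refine ⟨a, b, (norm_nonneg _).trans hpa, (norm_nonneg _).trans hqb, hab, x, hx, y, hy, ?_⟩
  rw [hxp, hyq]
  exact (e.symm_apply_apply z).symm

end AbsoluteSum

theorem stmt_18_general {X Y Z : Type*}
    [NormedAddCommGroup X] [NormedSpace ℝ X]
    [NormedAddCommGroup Y] [NormedSpace ℝ Y]
    [NormedAddCommGroup Z] [NormedSpace ℝ Z]
    (N : ℝ × ℝ → ℝ)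
    -- `N` is a norm on `ℝ²`:
    (Ntri : ∀ u v : ℝ × ℝ, N (u + v) ≤ N u + N v)
    (Nhom : ∀ (t : ℝ) (u : ℝ × ℝ), N (t • u) = |t| * N u)
    -- `N` is absolute and normalized:
    (Nabs : ∀ s t : ℝ, N (s, t) = N (|s|, |t|))
    (Nnorm₁ : N (1, 0) = 1)
    -- `Z = X ⊕_N Y`:
    (e : Z ≃ₗ[ℝ] X × Y)
    (he : ∀ z : Z, ‖z‖ = N (‖(e z).1‖, ‖(e z).2‖)) :
    (∀ a b : ℝ, 0 ≤ a → 0 ≤ b → N (a, b) = 1 →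
      ∀ x ∈ deltaPoints X, ∀ y ∈ deltaPoints Y,
        e.symm (a • x, b • y) ∈ deltaPoints Z) ∧
    (Metric.closedBall (0 : X) 1 = closure (convexHull ℝ (deltaPoints X)) →
     Metric.closedBall (0 : Y) 1 = closure (convexHull ℝ (deltaPoints Y)) →
     Metric.closedBall (0 : Z) 1 = closure (convexHull ℝ (deltaPoints Z))) := by
  have hN : IsAbsoluteSeminorm N := ⟨Ntri, Nhom, Nabs⟩
  refine ⟨fun a b ha hb hab x hx y hy => symm_smul_mem_deltaPoints hN he ha hb hab hx hy,
    fun hBX hBY => (closure_convexHull_deltaPoints_subset Z).antisymm' fun z hz => ?_⟩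
  obtain ⟨a, b, ha, hb, hab, x, hx, y, hy, rfl⟩ :=
    exists_eq_symm_smul hN Nnorm₁ he (mem_closedBall_zero_iff.mp hz)
  refine symm_smul_mem_closure_convexHull hN he a b
    (fun u hu v hv => symm_smul_mem_deltaPoints hN he ha hb hab hu hv) ?_ ?_
  · exact hBX ▸ mem_closedBall_zero_iff.mpr hx
  · exact hBY ▸ mem_closedBall_zero_iff.mpr hy

/-- Let `N` be an absolute normalized norm on `ℝ²` and `Z = X ⊕_N Y`. If
`a, b ≥ 0` with `N(a, b) = 1`, `x` is a Δ-point of `X` and `y` is a Δ-point of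
`Y`, then `(a•x, b•y)` is a Δ-point of `Z`. Consequently, if `X` and `Y` have
the convex DLD2P, then so does `Z`. -/
theorem stmt_18 {X Y Z : Type*}
    [NormedAddCommGroup X] [NormedSpace ℝ X] [CompleteSpace X]
    [NormedAddCommGroup Y] [NormedSpace ℝ Y] [CompleteSpace Y]
    [NormedAddCommGroup Z] [NormedSpace ℝ Z] [CompleteSpace Z]
    (N : ℝ × ℝ → ℝ)
    -- `N` is a norm on `ℝ²`:
    (Ntri : ∀ u v : ℝ × ℝ, N (u + v) ≤ N u + N v)
    (Nhom : ∀ (t : ℝ) (u : ℝ × ℝ), N (t • u) = |t| * N u)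
    (Ndef : ∀ u : ℝ × ℝ, N u = 0 → u = 0)
    -- `N` is absolute and normalized:
    (Nabs : ∀ s t : ℝ, N (s, t) = N (|s|, |t|))
    (Nnorm₁ : N (1, 0) = 1) (Nnorm₂ : N (0, 1) = 1)
    -- `Z = X ⊕_N Y`:
    (e : Z ≃ₗ[ℝ] X × Y)
    (he : ∀ z : Z, ‖z‖ = N (‖(e z).1‖, ‖(e z).2‖)) :
    (∀ a b : ℝ, 0 ≤ a → 0 ≤ b → N (a, b) = 1 →
      ∀ x ∈ deltaPoints X, ∀ y ∈ deltaPoints Y,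
        e.symm (a • x, b • y) ∈ deltaPoints Z) ∧
    (Metric.closedBall (0 : X) 1 = closure (convexHull ℝ (deltaPoints X)) →
     Metric.closedBall (0 : Y) 1 = closure (convexHull ℝ (deltaPoints Y)) →
     Metric.closedBall (0 : Z) 1 = closure (convexHull ℝ (deltaPoints Z))) :=
  stmt_18_general N Ntri Nhom Nabs Nnorm₁ e he
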